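/- arXiv:1104.4427 — 5 statements merged into one kernel-verified Lean document; each statement's English description precedes it below -/
import Mathlib

section
/- Let Σ be an alphabet and let C ⊆ Σ⁺ be an intercode, i.e., there exists m ≥ 1 such that C^{m+1} ∩ Σ⁺C^mΣ⁺ = ∅. Then every word in C is primitive, i.e., C ⊆ Q. -/
/-- `wpow v n` is the word `vⁿ`, the `n`-fold concatenation of the word `v` with itself. -/
def wpow {α : Type*} (v : List α) : ℕ → List α
  | 0 => []
  | n + 1 => v ++ wpow v n

/-- A nonempty word `u` is primitive if `u = vⁿ` implies `n = 1`. -/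
def Primitive {α : Type*} (u : List α) : Prop :=
  u ≠ [] ∧ ∀ (v : List α) (n : ℕ), u = wpow v n → n = 1

/-- `Σ⁺` as a language: the set of all nonempty words over `α`. -/
def plusLang (α : Type*) : Language α := {w : List α | w ≠ []}

lemma wpow_add {α : Type*} (v : List α) (a b : ℕ) :
    wpow v (a + b) = wpow v a ++ wpow v b := by
  induction a with
  | zero => simp [wpow]
  | succ k ih =>
      have : k + 1 + b = (k + b) + 1 := by ring
      rw [this, wpow, wpow, ih, List.append_assoc]

lemma wpow_wpow {α : Type*} (v : List α) (n m : ℕ) :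
    wpow (wpow v n) m = wpow v (n * m) := by
  induction m with
  | zero => simp [wpow]
  | succ k ih =>
      have : n * (k + 1) = n + n * k := by ring
      rw [wpow, ih, this, wpow_add]

lemma wpow_ne_nil {α : Type*} {v : List α} (hv : v ≠ []) {k : ℕ} (hk : 1 ≤ k) :
    wpow v k ≠ [] := by
  obtain ⟨j, rfl⟩ := Nat.exists_eq_add_of_le hk
  rw [Nat.add_comm, wpow]
  simp [hv]

lemma wpow_mem_pow {α : Type*} {C : Language α} {w : List α} (hw : w ∈ C) (m : ℕ) :
    wpow w m ∈ C ^ m := by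
  induction m with
  | zero => simp [wpow, Language.mem_one]
  | succ k ih =>
      rw [pow_succ']
      exact ⟨w, hw, wpow w k, ih, rfl⟩

/-- If `C ⊆ Σ⁺` is an intercode, i.e. `C^(m+1) ∩ Σ⁺ C^m Σ⁺ = ∅` for some `m ≥ 1`,
then every word of `C` is primitive. -/
theorem intercode_subset_primitive {α : Type*} (C : Language α)
    (hC : ∀ w ∈ C, w ≠ [])
    (hinter : ∃ m : ℕ, 1 ≤ m ∧
      C ^ (m + 1) ⊓ (plusLang α * C ^ m * plusLang α) = ⊥) :
    ∀ w ∈ C, Primitive w := by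
  obtain ⟨m, hm, hempty⟩ := hinter
  intro w hw
  refine ⟨hC w hw, ?_⟩
  intro v n heq
  by_contra hn
  have hwne : w ≠ [] := hC w hw
  -- v ≠ [] and n ≥ 2
  have hvne : v ≠ [] := by
    rintro rfl
    apply hwne
    rw [heq]
    clear heq hn
    induction n with
    | zero => rfl
    | succ k ih => rw [wpow]; simpa using ih
  have hn0 : n ≠ 0 := by rintro rfl; exact hwne heq
  have hn2 : 2 ≤ n := by omega
  -- the witness word
  have key : wpow w (m + 1) = v ++ (wpow w m ++ wpow v (n - 1)) := by
    have h1 : wpow w (m + 1) = wpow v (n * (m + 1)) := by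
      rw [← wpow_wpow, ← heq]
    have h2 : n * (m + 1) = 1 + (n * m + (n - 1)) := by rw [Nat.mul_succ]; omega
    rw [h1, h2, wpow_add, wpow_add, ← wpow_wpow, ← heq]
    simp [wpow]
  have hmem1 : wpow w (m + 1) ∈ C ^ (m + 1) := wpow_mem_pow hw (m + 1)
  have hmem2 : wpow w (m + 1) ∈ plusLang α * C ^ m * plusLang α := by
    rw [key]
    have hvk : wpow v (n - 1) ≠ [] := wpow_ne_nil hvne (by omega)
    refine ⟨v ++ wpow w m, ⟨v, hvne, wpow w m, wpow_mem_pow hw m, rfl⟩,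
      wpow v (n - 1), hvk, ?_⟩
    simp
  have : wpow w (m + 1) ∈ (⊥ : Language α) := hempty ▸ ⟨hmem1, hmem2⟩
  exact this
end

section
/- (Shyr–Thierrin) For words p and q over an alphabet Σ, the two-element set {p, q} is a code if and only if pq ≠ qp. -/
/-- A set of words `C` is a code if any two factorizations of a word into elements
of `C` coincide. -/
def IsCode {α : Type*} (C : Set (List α)) : Prop :=
  ∀ l₁ l₂ : List (List α), (∀ u ∈ l₁, u ∈ C) → (∀ v ∈ l₂, v ∈ C) →
    l₁.flatten = l₂.flatten → l₁ = l₂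

open scoped Computability

namespace Language

variable {α : Type*}

lemma pair_comm (x y : List α) : ({x, y} : Language α) = {y, x} :=
  Set.pair_comm x y

lemma append_mem_kstar {l : Language α} {x y : List α} (hx : x ∈ l∗) (hy : y ∈ l∗) :
    x ++ y ∈ l∗ :=
  kstar_mul_kstar l ▸ append_mem_mul hx hy

lemma left_mem_kstar_pair (x y : List α) : x ∈ ({x, y} : Language α)∗ :=
  le_kstar (a := ({x, y} : Language α)) (Set.mem_insert x {y})

lemma right_mem_kstar_pair (x y : List α) : y ∈ ({x, y} : Language α)∗ :=
  le_kstar (a := ({x, y} : Language α)) (Set.mem_insert_of_mem x rfl)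

lemma kstar_pair_append_le (x z : List α) :
    ({x, x ++ z} : Language α)∗ ≤ ({x, z} : Language α)∗ := by
  have hle : ({x, x ++ z} : Language α) ≤ ({x, z} : Language α)∗ :=
    Set.pair_subset (left_mem_kstar_pair x z)
      (append_mem_kstar (left_mem_kstar_pair x z) (right_mem_kstar_pair x z))
  simpa only [kstar_idem] using kstar_mono hle

lemma exists_eq_append_of_mem_kstar_pair_append {x z u : List α}
    (hu : u ∈ ({x, x ++ z} : Language α)∗) (hne : u ≠ []) :
    ∃ u' ∈ ({x, z} : Language α)∗, u = x ++ u' := by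
  obtain ⟨_ | ⟨w, L⟩, rfl, hL⟩ := mem_kstar.1 hu
  · exact absurd rfl hne
  have hrest : L.flatten ∈ ({x, z} : Language α)∗ :=
    kstar_pair_append_le x z (join_mem_kstar fun y hy => hL y (List.mem_cons_of_mem w hy))
  rcases hL w List.mem_cons_self with rfl | rfl
  · exact ⟨L.flatten, hrest, rfl⟩
  · exact ⟨z ++ L.flatten, append_mem_kstar (right_mem_kstar_pair x z) hrest, by simp⟩

theorem append_comm_of_append_eq_append {x y u v : List α}
    (hu : u ∈ ({x, y} : Language α)∗) (hv : v ∈ ({x, y} : Language α)∗)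
    (h : x ++ u = y ++ v) : x ++ y = y ++ x := by
  induction hn : x.length + y.length using Nat.strong_induction_on generalizing x y u v with
  | _ n ih =>
  wlog hxy : x.length ≤ y.length generalizing x y u v
  · exact (this (pair_comm x y ▸ hv) (pair_comm x y ▸ hu) h.symm (by omega)
      (by omega)).symm
  rcases eq_or_ne x [] with rfl | hx
  · simp
  obtain ⟨z, rfl⟩ := List.prefix_of_prefix_length_le ⟨u, h⟩ ⟨v, rfl⟩ hxy
  have hzv : u = z ++ v := by simpa using h
  rcases eq_or_ne u [] with rfl | hne
  · obtain rfl : z = [] := (List.append_eq_nil_iff.1 hzv.symm).1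
    simp
  obtain ⟨u', hu', rfl⟩ := exists_eq_append_of_mem_kstar_pair_append hu hne
  have hcomm : x ++ z = z ++ x :=
    ih (x.length + z.length) (by simp [← hn, List.length_pos_iff.2 hx]) hu'
      (kstar_pair_append_le x z hv) hzv rfl
  rw [List.append_assoc, ← hcomm]

end Language

open Language

theorem isCode_pair_of_append_ne {α : Type*} {p q : List α} (h : p ++ q ≠ q ++ p) :
    IsCode ({p, q} : Set (List α)) := by
  have hne : ∀ w ∈ ({p, q} : Set (List α)), w ≠ [] := by
    rintro w (rfl | rfl) rfl <;> simp at h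
  intro l₁
  induction l₁ with
  | nil =>
    rintro (_ | ⟨b, l₂⟩) - h₂ hf
    · rfl
    · exact absurd (List.append_eq_nil_iff.1 hf.symm).1 (hne b (h₂ b List.mem_cons_self))
  | cons a l₁ ih =>
    rintro (_ | ⟨b, l₂⟩) h₁ h₂ hf
    · exact absurd (List.append_eq_nil_iff.1 hf).1 (hne a (h₁ a List.mem_cons_self))
    have hf' : a ++ l₁.flatten = b ++ l₂.flatten := by simpa using hf
    have hm₁ : l₁.flatten ∈ ({p, q} : Language α)∗ :=
      join_mem_kstar fun w hw => h₁ w (List.mem_cons_of_mem a hw)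
    have hm₂ : l₂.flatten ∈ ({p, q} : Language α)∗ :=
      join_mem_kstar fun w hw => h₂ w (List.mem_cons_of_mem b hw)
    by_cases hab : a = b
    · subst hab
      rw [ih l₂ (fun w hw => h₁ w (List.mem_cons_of_mem a hw))
        (fun w hw => h₂ w (List.mem_cons_of_mem a hw)) (List.append_cancel_left hf')]
    rcases h₁ a List.mem_cons_self with rfl | rfl <;>
      rcases h₂ b List.mem_cons_self with rfl | rfl
    · exact absurd rfl hab
    · exact absurd (append_comm_of_append_eq_append hm₁ hm₂ hf') h
    · rw [pair_comm] at hm₁ hm₂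
      exact absurd (append_comm_of_append_eq_append hm₁ hm₂ hf').symm h
    · exact absurd rfl hab

/-- Shyr–Thierrin: the two-element set `{p, q}` is a code iff `pq ≠ qp`. -/
theorem shyr_thierrin_code_iff {α : Type*} (p q : List α) (hpq : p ≠ q) :
    IsCode ({p, q} : Set (List α)) ↔ p ++ q ≠ q ++ p := by
  refine ⟨fun hcode hcomm => hpq ?_, isCode_pair_of_append_ne⟩
  have := hcode [p, q] [q, p] (by simp) (by simp) (by simpa using hcomm)
  exact (List.cons_eq_cons.1 this).1
end

section
/- (Fine–Wilf) Let p and q be nonempty words over an alphabet Σ with |p| = n, |q| = m, and let d = gcd(n, m). If for some natural numbers i and j the powers p^i and q^j have a common prefix of length at least n + m − d, then p and q are powers of a common word of length d; in particular there exists a word r with |r| = d, p ∈ r*, and q ∈ r*. -/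
/-!
Every common prefix `u` of `pⁱ` and `qʲ` has the periods `|p|` and `|q|`, so by the periodicity
lemma (`List.HasPeriod.gcd`) it has the period `d = gcd(|p|, |q|)`. Since `u` is long enough to
contain `p` and `q` as prefixes, both are words of period `d` whose lengths are multiples of `d`,
hence powers of the common prefix `u.take d`.
-/

open List

section wpow

variable {α : Type*}

@[simp]
theorem wpow_zero (v : List α) : wpow v 0 = [] := rfl

theorem wpow_succ (v : List α) (s : ℕ) : wpow v (s + 1) = v ++ wpow v s := rfl

@[simp]
theorem length_wpow (v : List α) (s : ℕ) : (wpow v s).length = s * v.length := by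
  induction s with
  | zero => simp
  | succ s ih => simp [wpow_succ, ih, Nat.succ_mul, Nat.add_comm]

theorem getElem?_wpow (v : List α) {s k : ℕ} (hk : k < s * v.length) :
    (wpow v s)[k]? = v[k % v.length]? := by
  induction s generalizing k with
  | zero => simp at hk
  | succ s ih =>
    rw [wpow_succ]
    rcases lt_or_ge k v.length with hkv | hkv
    · rw [getElem?_append_left hkv, Nat.mod_eq_of_lt hkv]
    · rw [getElem?_append_right hkv, ih (by rw [Nat.succ_mul] at hk; omega),
        ← Nat.mod_eq_sub_mod hkv]

theorem wpow_prefix_wpow_succ (v : List α) (s : ℕ) : wpow v s <+: wpow v (s + 1) := by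
  induction s with
  | zero => exact nil_prefix
  | succ s ih => exact (prefix_append_right_inj v).2 ih

theorem hasPeriod_wpow (v : List α) (s : ℕ) : (wpow v s).HasPeriod v.length := by
  cases s with
  | zero => exact hasPeriod_empty _
  | succ s =>
    rw [HasPeriod, wpow_succ, take_left]
    exact (prefix_append_right_inj v).2 (wpow_prefix_wpow_succ v s)

theorem prefix_of_prefix_wpow {v u : List α} {s : ℕ} (hu : u <+: wpow v s)
    (hlen : v.length ≤ u.length) : v <+: u := by
  cases s with
  | zero =>
    rw [wpow_zero, prefix_nil] at hu
    subst hu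
    rw [length_eq_zero_iff.1 (Nat.le_zero.1 hlen)]
  | succ s => exact prefix_of_prefix_length_le (prefix_append v _) hu hlen

theorem eq_wpow_take_of_hasPeriod {w : List α} {d : ℕ} (per : w.HasPeriod d)
    (hd : d ∣ w.length) : w = wpow (w.take d) (w.length / d) := by
  rcases eq_or_ne w [] with rfl | hw
  · simp
  have hw0 : 0 < w.length := length_pos_iff.2 hw
  have hd0 : 0 < d := Nat.pos_of_dvd_of_pos hd hw0
  have hlen : (w.take d).length = d := length_take_of_le (Nat.le_of_dvd hw0 hd)
  have hlen' : (w.length / d) * (w.take d).length = w.length := by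
    rw [hlen, Nat.div_mul_cancel hd]
  apply ext_getElem?
  intro k
  rcases lt_or_ge k w.length with hk | hk
  · rw [getElem?_wpow _ (hlen'.symm ▸ hk), hlen, getElem?_take_of_lt (Nat.mod_lt _ hd0),
      per.getElem?_mod d k w hk]
  · rw [getElem?_eq_none hk, getElem?_eq_none (by rwa [length_wpow, hlen'])]

theorem List.IsPrefix.eq_wpow_take {w u : List α} {d : ℕ} (hw : w <+: u) (per : u.HasPeriod d)
    (hd : d ∣ w.length) (hdw : d ≤ w.length) : w = wpow (u.take d) (w.length / d) := by
  have htake : u.take d = w.take d := by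
    conv_rhs => rw [prefix_iff_eq_take.1 hw, take_take, Nat.min_eq_left hdw]
  rw [htake]
  exact eq_wpow_take_of_hasPeriod (per.infix hw.isInfix) hd

end wpow

/-- Fine–Wilf: if powers `pⁱ` and `qʲ` of nonempty words `p, q` have a common prefix of
length at least `|p| + |q| - gcd(|p|,|q|)`, then `p` and `q` are powers of a common word
of length `gcd(|p|,|q|)`. -/
theorem fine_wilf {α : Type*} (p q : List α) (hp : p ≠ []) (hq : q ≠ [])
    (i j : ℕ) (u : List α)
    (hlen : p.length + q.length - Nat.gcd p.length q.length ≤ u.length)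
    (hup : u <+: wpow p i) (huq : u <+: wpow q j) :
    ∃ r : List α, r.length = Nat.gcd p.length q.length ∧
      (∃ k : ℕ, p = wpow r k) ∧ (∃ l : ℕ, q = wpow r l) := by
  set d := Nat.gcd p.length q.length
  have hdp : d ≤ p.length := Nat.gcd_le_left _ (length_pos_iff.2 hp)
  have hdq : d ≤ q.length := Nat.gcd_le_right _ (length_pos_iff.2 hq)
  have hper : u.HasPeriod d :=
    ((hasPeriod_wpow p i).infix hup.isInfix).gcd ((hasPeriod_wpow q j).infix huq.isInfix) hlen
  have hpu : p <+: u := prefix_of_prefix_wpow hup (by omega)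
  have hqu : q <+: u := prefix_of_prefix_wpow huq (by omega)
  refine ⟨u.take d, length_take_of_le (by omega), ⟨p.length / d, ?_⟩, ⟨q.length / d, ?_⟩⟩
  · exact hpu.eq_wpow_take hper (Nat.gcd_dvd_left _ _) hdp
  · exact hqu.eq_wpow_take hper (Nat.gcd_dvd_right _ _) hdq
end

section
/- (Shyr–Thierrin) Let u₁ and u₂ be words over an alphabet Σ with u₁u₂ ≠ ε. If u₁u₂ = p^i for some primitive word p and natural number i, then there exists a primitive word q with u₂u₁ = q^i. Consequently, conjugate nonempty words have the same degree, roots of the same length, and u₁u₂ is primitive if and only if u₂u₁ is primitive. -/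
lemma wpow_nil {α : Type*} (i : ℕ) : wpow ([] : List α) i = [] := by
  induction i with
  | zero => rfl
  | succ k ih => simpa [wpow] using ih

lemma wpow_rotate {α : Type*} (x y : List α) (i : ℕ) :
    wpow (x ++ y) i ++ x = x ++ wpow (y ++ x) i := by
  induction i with
  | zero => simp [wpow]
  | succ j ih => simp only [wpow, List.append_assoc, ih]

lemma wpowConjRot {α : Type*} (u₁ : List α) : ∀ (u₂ p : List α) (i : ℕ),
    u₁ ++ u₂ = wpow p i →
    ∃ r s : List α, p = r ++ s ∧ u₂ ++ u₁ = wpow (s ++ r) i := by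
  induction u₁ with
  | nil =>
    intro u₂ p i h
    exact ⟨p, [], by simp, by simpa using h⟩
  | cons a t ih =>
    intro u₂ p i h
    cases i with
    | zero => simp [wpow] at h
    | succ j =>
      match p, h with
      | [], h => exfalso; rw [wpow_nil] at h; exact List.cons_ne_nil _ _ h
      | b :: w, h =>
        have hb : a = b := by
          have := congrArg (fun l => l.head?) h
          simpa [wpow] using this
        subst hb
        have h1 : a :: (t ++ (u₂ ++ [a])) = wpow (a :: w) (j+1) ++ [a] := by
          simp only [← h]; simp
        have h2 : wpow (a :: w) (j+1) ++ [a] = a :: wpow (w ++ [a]) (j+1) := by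
          have := wpow_rotate [a] w (j+1)
          simpa using this
        have h3 : t ++ (u₂ ++ [a]) = wpow (w ++ [a]) (j+1) :=
          List.cons_injective (h1.trans h2)
        obtain ⟨r, s, hrs, hpow'⟩ := ih (u₂ ++ [a]) (w ++ [a]) (j+1) h3
        have hres : u₂ ++ (a :: t) = wpow (s ++ r) (j+1) := by
          simpa using hpow'
        rcases s.eq_nil_or_concat with hs | ⟨s₁, c, hc⟩
        · -- s = [], so r = w ++ [a]
          subst hs
          simp only [List.append_nil] at hrs
          subst hrs
          exact ⟨[a], w, by simp, by simpa using hres⟩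
        · subst hc
          have h4 : w ++ [a] = (r ++ s₁) ++ [c] := by
            simpa [List.append_assoc] using hrs
          obtain ⟨hw, hac⟩ := List.append_inj' h4 rfl
          have hca : a = c := by simpa using hac
          subst hca
          refine ⟨a :: r, s₁, by simp [hw], ?_⟩
          rw [hres]
          congr 1
          simp

/-- Shyr–Thierrin: if `u₁u₂ ≠ ε` and `u₁u₂ = pⁱ` with `p` primitive, then `u₂u₁ = qⁱ`
for some primitive word `q` (and `|q| = |p|`, so conjugate words have the same degree
and roots of the same length, and `u₁u₂` is primitive iff `u₂u₁` is). -/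
theorem shyr_thierrin_conjugate {α : Type*} (u₁ u₂ : List α) (h : u₁ ++ u₂ ≠ [])
    (p : List α) (i : ℕ) (hp : Primitive p) (hpow : u₁ ++ u₂ = wpow p i) :
    ∃ q : List α, Primitive q ∧ q.length = p.length ∧ u₂ ++ u₁ = wpow q i := by
  obtain ⟨r, s, hrs, hq⟩ := wpowConjRot u₁ u₂ p i hpow
  refine ⟨s ++ r, ⟨?_, ?_⟩, by rw [hrs]; simp [Nat.add_comm], hq⟩
  · intro hnil
    apply hp.1
    obtain ⟨hs, hr⟩ := List.append_eq_nil_iff.mp hnil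
    rw [hrs, hs, hr]; rfl
  · intro v n hv
    obtain ⟨r₂, s₂, hv₂, hrs₂⟩ := wpowConjRot s r v n hv
    exact hp.2 (s₂ ++ r₂) n (by rw [hrs]; exact hrs₂)
end

section
/- Let Σ be an alphabet and let a and b be two distinct letters of Σ. Then the language {a^i b^j a^i b^j : i, j ∈ ℕ} over Σ is not context-free. -/
/-!
A minimal parse tree of a long word contains a subtree, of height at most one more than the
number of nonterminals, whose root nonterminal `A` reappears below it. Replacing this subtree by
the lower `A`-subtree deletes two subwords `v, x` from a window of bounded length, and minimality
of the tree makes `v ++ x` nonempty.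

For `aᵖbᵖaᵖbᵖ` the window, of length at most `p`, stays clear of the first two blocks, of the
last two blocks, or of both outer blocks. The intact blocks force `i, j ≥ p` in any `aⁱbʲaⁱbʲ`
the shortened word could equal, which contradicts its length `< 4p`.
-/

namespace ContextFreeGrammar

inductive ParseTree (T N : Type*) where
  | leaf (t : T)
  | node (n : N) (children : List (ParseTree T N))

variable {T : Type*}

section Derives

variable {g : ContextFreeGrammar T}

lemma Derives.append {u v u' v' : List (Symbol T g.NT)} (h : g.Derives u v)
    (h' : g.Derives u' v') : g.Derives (u ++ u') (v ++ v') :=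
  (h.append_right u').trans (h'.append_left v)

lemma derives_map_flatten {ι : Type*} {f : ι → Symbol T g.NT} {F : ι → List (Symbol T g.NT)} :
    ∀ {l : List ι}, (∀ i ∈ l, g.Derives [f i] (F i)) → g.Derives (l.map f) (l.map F).flatten
  | [], _ => .refl []
  | i :: l, h =>
    Derives.append (h i (by simp)) (derives_map_flatten fun j hj => h j (by simp [hj]))

end Derives

namespace ParseTree

variable {N : Type*}

def root : ParseTree T N → Symbol T N
  | leaf t => .terminal t
  | node n _ => .nonterminal n

def children : ParseTree T N → List (ParseTree T N)
  | leaf _ => []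
  | node _ ts => ts

def yield : ParseTree T N → List T
  | leaf t => [t]
  | node _ ts => (ts.map yield).flatten

def height : ParseTree T N → ℕ
  | leaf _ => 0
  | node _ ts => (ts.map height).foldr max 0 + 1

def size : ParseTree T N → ℕ
  | leaf _ => 1
  | node _ ts => (ts.map size).sum + 1

def IsSubtree : ParseTree T N → ParseTree T N → Prop :=
  Relation.ReflTransGen fun c t => c ∈ t.children

lemma IsSubtree.of_mem_children {s c t : ParseTree T N} (hs : s.IsSubtree c)
    (hc : c ∈ t.children) : s.IsSubtree t :=
  Relation.ReflTransGen.tail hs hc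

lemma height_lt_of_mem_children {c t : ParseTree T N} (hc : c ∈ t.children) :
    c.height < t.height := by
  cases t with
  | leaf => simp [children] at hc
  | node n ts =>
    rw [height, Nat.lt_succ_iff]
    exact List.le_max_of_le' 0 (List.mem_map_of_mem hc) le_rfl

lemma size_lt_of_mem_children {c t : ParseTree T N} (hc : c ∈ t.children) :
    c.size < t.size := by
  cases t with
  | leaf => simp [children] at hc
  | node n ts =>
    rw [size, Nat.lt_succ_iff]
    exact List.le_sum_of_mem (List.mem_map_of_mem hc)

lemma IsSubtree.height_le {s t : ParseTree T N} (h : s.IsSubtree t) : s.height ≤ t.height := by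
  induction h with
  | refl => rfl
  | tail _ hc ih => exact ih.trans (height_lt_of_mem_children hc).le

lemma IsSubtree.size_le {s t : ParseTree T N} (h : s.IsSubtree t) : s.size ≤ t.size := by
  induction h with
  | refl => rfl
  | tail _ hc ih => exact ih.trans (size_lt_of_mem_children hc).le

theorem height_le_card_of_forall_root_ne [DecidableEq N] (S : Finset N) :
    ∀ t : ParseTree T N,
      (∀ s : ParseTree T N, s.IsSubtree t → ∀ A, s.root = .nonterminal A → A ∈ S) →
      (∀ tA : ParseTree T N, tA.IsSubtree t → ∀ c ∈ tA.children, ∀ tB : ParseTree T N,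
        tB.IsSubtree c → tB.root ≠ tA.root) →
      t.height ≤ S.card
  | leaf _, _, _ => by simp [height]
  | node n ts, hS, hrep => by
    have hn : n ∈ S := hS _ .refl n rfl
    have hchild : ∀ c ∈ ts, c.height ≤ (S.erase n).card := fun c hc =>
      height_le_card_of_forall_root_ne (S.erase n) c
        (fun s hs A hA => Finset.mem_erase.2
          ⟨fun hAn => hrep _ .refl c hc s hs (by rw [hA, hAn]; rfl),
            hS s (hs.of_mem_children hc) A hA⟩)
        (fun tA hA => hrep tA (hA.of_mem_children hc))
    rw [Finset.card_erase_of_mem hn] at hchild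
    have := Finset.card_pos.2 ⟨n, hn⟩
    have : (ts.map height).foldr max 0 ≤ S.card - 1 :=
      List.max_le_of_forall_le _ _ (by simpa using hchild)
    rw [height]
    omega

theorem exists_repeated_root [DecidableEq N] (S : Finset N) :
    ∀ t : ParseTree T N,
      (∀ s : ParseTree T N, s.IsSubtree t → ∀ A, s.root = .nonterminal A → A ∈ S) →
      S.card < t.height → ∃ tA : ParseTree T N, tA.IsSubtree t ∧ tA.height ≤ S.card + 1 ∧
        ∃ c ∈ tA.children, ∃ tB : ParseTree T N, tB.IsSubtree c ∧ tB.root = tA.root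
  | leaf _, _, h => by simp [height] at h
  | node n ts, hS, h => by
    by_cases htall : ∃ c ∈ ts, S.card < c.height
    · obtain ⟨c, hc, hlt⟩ := htall
      obtain ⟨tA, hA, hrep⟩ :=
        exists_repeated_root S c (fun s hs => hS s (hs.of_mem_children hc)) hlt
      exact ⟨tA, hA.of_mem_children hc, hrep⟩
    · have hle : (node n ts).height ≤ S.card + 1 := by
        have : (ts.map height).foldr max 0 ≤ S.card :=
          List.max_le_of_forall_le _ _ (by simpa using htall)
        rw [height]
        omega
      by_contra hnone
      exact h.not_ge (height_le_card_of_forall_root_ne S _ hS fun tA hA c hc tB hB hroot =>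
        hnone ⟨tA, hA, hA.height_le.trans hle, c, hc, tB, hB, hroot⟩)

inductive Valid (g : ContextFreeGrammar T) : ParseTree T g.NT → Prop
  | leaf (t : T) : Valid g (leaf t)
  | node (n : g.NT) (ts : List (ParseTree T g.NT)) (hr : ⟨n, ts.map root⟩ ∈ g.rules)
      (hts : ∀ c ∈ ts, Valid g c) : Valid g (node n ts)

def IsMinimal (g : ContextFreeGrammar T) (t : ParseTree T g.NT) : Prop :=
  Valid g t ∧ ∀ t' : ParseTree T g.NT, Valid g t' → t'.root = t.root → t'.yield = t.yield →
    t.size ≤ t'.size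

variable {g : ContextFreeGrammar T}

lemma Valid.of_mem_children {c t : ParseTree T g.NT} (ht : Valid g t) (hc : c ∈ t.children) :
    Valid g c := by
  cases ht with
  | leaf => simp [children] at hc
  | node n ts _ hts => exact hts c hc

lemma Valid.of_isSubtree {s t : ParseTree T g.NT} (ht : Valid g t) (hs : s.IsSubtree t) :
    Valid g s := by
  induction hs with
  | refl => exact ht
  | tail _ hc ih => exact ih (ht.of_mem_children hc)

lemma Valid.exists_mem_rules {t : ParseTree T g.NT} {A : g.NT} (ht : Valid g t)
    (hA : t.root = .nonterminal A) : ∃ r ∈ g.rules, r.input = A := by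
  cases ht with
  | leaf => simp [root] at hA
  | node n ts hr _ => exact ⟨_, hr, by simpa [root] using hA⟩

lemma Valid.derives {t : ParseTree T g.NT} (ht : Valid g t) :
    g.Derives [t.root] (t.yield.map .terminal) := by
  induction ht with
  | leaf => simpa [root, yield] using Derives.refl _
  | node n ts hr _ ih =>
    have hstep : g.Produces [.nonterminal n] (ts.map root) :=
      ⟨_, hr, ContextFreeRule.Rewrites.input_output⟩
    simpa [root, yield, List.map_flatten, Function.comp_def] using
      hstep.trans_derives (derives_map_flatten ih)

lemma exists_valid_of_derives {u : List (Symbol T g.NT)} {w : List T}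
    (h : g.Derives u (w.map .terminal)) :
    ∃ ts : List (ParseTree T g.NT), (∀ c ∈ ts, Valid g c) ∧ ts.map root = u ∧
      (ts.map yield).flatten = w := by
  induction h using Relation.ReflTransGen.head_induction_on with
  | refl =>
    refine ⟨w.map leaf, by simp [Valid.leaf], by simp [Function.comp_def, root], ?_⟩
    simp [Function.comp_def, yield, ← List.flatMap_def]
  | head hp _ ih =>
    obtain ⟨r, hr, hrw⟩ := hp
    obtain ⟨p, q, rfl, rfl⟩ := hrw.exists_parts
    obtain ⟨ts, hval, hroots, hyield⟩ := ih
    obtain ⟨tpr, tq, rfl, hpr, rfl⟩ := List.map_eq_append_iff.1 hroots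
    obtain ⟨tp, tr, rfl, rfl, hr'⟩ := List.map_eq_append_iff.1 hpr
    refine ⟨tp ++ node r.input tr :: tq, ?_, by simp [root], by simpa [yield] using hyield⟩
    simp only [List.mem_append, List.mem_cons] at hval ⊢
    rintro c (hc | rfl | hc)
    · exact hval c (.inl (.inl hc))
    · exact .node _ _ (by rw [hr']; exact hr) fun d hd => hval d (.inl (.inr hd))
    · exact hval c (.inr hc)

lemma exists_valid_of_mem_language {w : List T} (hw : w ∈ g.language) :
    ∃ t : ParseTree T g.NT, Valid g t ∧ t.root = .nonterminal g.initial ∧ t.yield = w := by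
  obtain ⟨ts, hval, hroots, hyield⟩ := exists_valid_of_derives hw
  obtain ⟨t, rfl, hroot⟩ := List.map_eq_singleton_iff.1 hroots
  exact ⟨t, hval t (by simp), hroot, by simpa using hyield⟩

lemma Valid.exists_derives_of_mem_children {c t : ParseTree T g.NT} (ht : Valid g t)
    (hc : c ∈ t.children) : ∃ u y : List T, t.yield = u ++ c.yield ++ y ∧
      g.Derives [t.root] (u.map .terminal ++ c.root :: y.map .terminal) := by
  cases ht with
  | leaf => simp [children] at hc
  | node n ts hr hts =>
    obtain ⟨l, l', rfl⟩ := List.append_of_mem hc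
    have hstep : g.Produces [.nonterminal n] (l.map root ++ c.root :: l'.map root) :=
      ⟨_, hr, by simpa using ContextFreeRule.Rewrites.input_output⟩
    have hsides (l'' : List (ParseTree T g.NT)) (hl : ∀ d ∈ l'', d ∈ l ++ c :: l') :
        g.Derives (l''.map root) ((l''.map yield).flatten.map .terminal) := by
      simpa [List.map_flatten, Function.comp_def] using
        derives_map_flatten fun d hd => (hts d (hl d hd)).derives
    refine ⟨(l.map yield).flatten, (l'.map yield).flatten, by simp [yield], ?_⟩
    exact hstep.trans_derives (Derives.append (hsides l (by simp +contextual))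
      (Derives.append (.refl [c.root]) (hsides l' (by simp +contextual))))

lemma Valid.exists_derives_of_isSubtree {s t : ParseTree T g.NT} (ht : Valid g t)
    (hs : s.IsSubtree t) : ∃ u y : List T, t.yield = u ++ s.yield ++ y ∧
      g.Derives [t.root] (u.map .terminal ++ s.root :: y.map .terminal) := by
  induction hs with
  | refl => exact ⟨[], [], by simp, by simpa using Derives.refl _⟩
  | tail _ hb ih =>
    obtain ⟨u, y, hyield, hder⟩ := ht.exists_derives_of_mem_children hb
    obtain ⟨u', y', hyield', hder'⟩ := ih (ht.of_mem_children hb)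
    refine ⟨u ++ u', y' ++ y, by simp [hyield, hyield'], ?_⟩
    simpa using hder.trans (Derives.append (.refl _) (Derives.append hder' (.refl _)))

lemma Valid.length_yield_le {m : ℕ} (hm : ∀ r ∈ g.rules, r.output.length ≤ m)
    {t : ParseTree T g.NT} (ht : Valid g t) : t.yield.length ≤ m ^ t.height := by
  induction ht with
  | leaf => simp [yield, height]
  | node n ts hr _ ih =>
    have hts : ts.length ≤ m := by simpa using hm _ hr
    set H := (ts.map height).foldr max 0
    have hchild : ∀ c ∈ ts, c.yield.length ≤ m ^ H := fun c hc =>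
      (ih c hc).trans (Nat.pow_le_pow_right (by have := List.length_pos_of_mem hc; omega)
        (List.le_max_of_le' 0 (List.mem_map_of_mem hc) le_rfl))
    calc (ParseTree.node n ts).yield.length = (ts.map fun c => c.yield.length).sum := by
          simp [yield, List.length_flatten, Function.comp_def]
      _ ≤ ts.length * m ^ H := by
          simpa using List.sum_le_card_nsmul (ts.map fun c => c.yield.length) (m ^ H)
            (by simpa using hchild)
      _ ≤ m * m ^ H := Nat.mul_le_mul_right _ hts
      _ = m ^ (ParseTree.node n ts).height := by rw [height, pow_succ']

lemma Valid.exists_isMinimal {t : ParseTree T g.NT} (ht : Valid g t) :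
    ∃ t' : ParseTree T g.NT, IsMinimal g t' ∧ t'.root = t.root ∧ t'.yield = t.yield := by
  obtain ⟨t', ⟨hv, hroot, hyield⟩, hmin⟩ := (measure size).wf.has_min
    {t' | Valid g t' ∧ t'.root = t.root ∧ t'.yield = t.yield} ⟨t, ht, rfl, rfl⟩
  exact ⟨t', ⟨hv, fun t'' hv' hr hy =>
    not_lt.1 (hmin t'' ⟨hv', hr.trans hroot, hy.trans hyield⟩)⟩, hroot, hyield⟩

lemma IsMinimal.of_mem_children {c t : ParseTree T g.NT} (ht : IsMinimal g t)
    (hc : c ∈ t.children) : IsMinimal g c := by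
  obtain ⟨hv, hmin⟩ := ht
  refine ⟨hv.of_mem_children hc, fun c' hv' hroot hyield => ?_⟩
  cases hv with
  | leaf => simp [children] at hc
  | node n ts hr hts =>
    obtain ⟨l, l', rfl⟩ := List.append_of_mem hc
    have hvalid : Valid g (.node n (l ++ c' :: l')) := by
      refine .node n _ (by simpa [hroot] using hr) ?_
      simp only [List.mem_append, List.mem_cons] at hts ⊢
      rintro d (hd | rfl | hd)
      · exact hts d (.inl hd)
      · exact hv'
      · exact hts d (.inr (.inr hd))
    have := hmin _ hvalid rfl (by simp [yield, hyield])
    simp only [size, List.map_append, List.map_cons, List.sum_append, List.sum_cons] at this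
    omega

lemma IsMinimal.of_isSubtree {s t : ParseTree T g.NT} (ht : IsMinimal g t)
    (hs : s.IsSubtree t) : IsMinimal g s := by
  induction hs with
  | refl => exact ht
  | tail _ hc ih => exact ih (ht.of_mem_children hc)

lemma IsMinimal.yield_ne {s c t : ParseTree T g.NT} (ht : IsMinimal g t) (hc : c ∈ t.children)
    (hs : s.IsSubtree c) (hroot : s.root = t.root) : s.yield ≠ t.yield := fun hyield =>
  (hs.size_le.trans_lt (size_lt_of_mem_children hc)).not_ge
    (ht.2 s (ht.1.of_isSubtree (hs.of_mem_children hc)) hroot hyield)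

end ParseTree

end ContextFreeGrammar

open ContextFreeGrammar ParseTree in
theorem Language.IsContextFree.exists_pump_down {T : Type*} {L : Language T}
    (hL : L.IsContextFree) :
    ∃ p : ℕ, ∀ w ∈ L, p ≤ w.length → ∃ u v s x y : List T, w = u ++ v ++ s ++ x ++ y ∧
      v ++ x ≠ [] ∧ (v ++ s ++ x).length ≤ p ∧ u ++ s ++ y ∈ L := by
  classical
  obtain ⟨g, rfl⟩ := hL
  set m := max 2 (g.rules.sup fun r => r.output.length)
  set S := g.rules.image ContextFreeRule.input
  have hm : ∀ r ∈ g.rules, r.output.length ≤ m := fun r hr =>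
    (Finset.le_sup (f := fun r => r.output.length) hr).trans (le_max_right _ _)
  refine ⟨m ^ (S.card + 1), fun w hw hlen => ?_⟩
  obtain ⟨t₀, ht₀, hroot₀, rfl⟩ := exists_valid_of_mem_language hw
  obtain ⟨t, ht, hroot, hyield⟩ := ht₀.exists_isMinimal
  have hS (s : ParseTree T g.NT) (hs : s.IsSubtree t) (A : g.NT)
      (hA : s.root = .nonterminal A) : A ∈ S :=
    Finset.mem_image.2 ((ht.1.of_isSubtree hs).exists_mem_rules hA)
  have hheight : S.card < t.height := by
    by_contra! hle
    have := ht.1.length_yield_le hm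
    rw [hyield] at this
    have : m ^ t.height < m ^ (S.card + 1) := Nat.pow_lt_pow_right (by omega) (by omega)
    omega
  obtain ⟨tA, hA, hAheight, c, hc, tB, hB, hBroot⟩ := exists_repeated_root S t hS hheight
  have hvA := ht.1.of_isSubtree hA
  obtain ⟨u, y, hwA, hderA⟩ := ht.1.exists_derives_of_isSubtree hA
  obtain ⟨v, x, hAB, -⟩ := hvA.exists_derives_of_isSubtree (hB.of_mem_children hc)
  refine ⟨u, v, tB.yield, x, y, by rw [← hyield, hwA, hAB]; simp, ?_, ?_, ?_⟩
  · intro hvx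
    obtain ⟨rfl, rfl⟩ := List.append_eq_nil_iff.1 hvx
    exact (ht.of_isSubtree hA).yield_ne hc hB hBroot (by simpa using hAB.symm)
  · calc (v ++ tB.yield ++ x).length = tA.yield.length := by rw [hAB]
      _ ≤ m ^ tA.height := hvA.length_yield_le hm
      _ ≤ m ^ (S.card + 1) := Nat.pow_le_pow_right (by omega) hAheight
  · have hderB := (hvA.of_isSubtree (hB.of_mem_children hc)).derives
    rw [hBroot] at hderB
    have := hderA.trans (Derives.append (.refl _) (Derives.append hderB (.refl _)))
    rw [hroot, hroot₀] at this
    simpa using this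

section abab

open List

variable {α : Type*} {a b : α} {p i j : ℕ}

def abab (a b : α) (i j : ℕ) : List α :=
  replicate i a ++ replicate j b ++ replicate i a ++ replicate j b

lemma length_abab (a b : α) (i j : ℕ) : (abab a b i j).length = 2 * i + 2 * j := by
  simp [abab]
  omega

lemma reverse_abab (a b : α) (i j : ℕ) : (abab a b i j).reverse = abab b a j i := by
  simp [abab]

lemma le_of_replicate_prefix_replicate_append_cons (hab : a ≠ b) {l : List α}
    (h : replicate p a <+: replicate i a ++ b :: l) : p ≤ i := by
  by_contra! hlt
  obtain ⟨k, rfl⟩ := Nat.exists_eq_add_of_lt hlt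
  rw [Nat.add_assoc, replicate_add, replicate_succ, prefix_append_right_inj,
    cons_prefix_cons] at h
  exact hab h.1

lemma eq_of_replicate_append_cons_prefix (hab : a ≠ b) {l l' : List α} :
    ∀ {p i : ℕ}, replicate p a ++ b :: l <+: replicate i a ++ b :: l' → p = i
  | 0, 0, _ => rfl
  | 0, _ + 1, h => absurd (cons_prefix_cons.1 h).1 hab.symm
  | _ + 1, 0, h => absurd (cons_prefix_cons.1 h).1 hab
  | _ + 1, _ + 1, h =>
    congrArg (· + 1) (eq_of_replicate_append_cons_prefix hab (cons_prefix_cons.1 h).2)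

lemma le_of_replicate_prefix_abab (hab : a ≠ b) (hb : b ∈ abab a b i j)
    (h : replicate p a <+: abab a b i j) : p ≤ i := by
  obtain ⟨j, rfl⟩ := Nat.exists_eq_add_one_of_ne_zero (n := j)
    (by rintro rfl; simp [abab, hab.symm] at hb)
  exact le_of_replicate_prefix_replicate_append_cons hab (by simpa [abab, replicate_succ] using h)

lemma le_of_prefix_abab (hab : a ≠ b) (h : replicate p a ++ replicate p b <+: abab a b i j) :
    p ≤ i ∧ p ≤ j := by
  rcases p with _ | q
  · simp
  obtain ⟨k, rfl⟩ := Nat.exists_eq_add_one_of_ne_zero (n := j)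
    (by rintro rfl; simpa [abab, hab.symm] using h.subset (by simp : b ∈ _))
  obtain rfl : q + 1 = i :=
    eq_of_replicate_append_cons_prefix hab (by simpa [abab, replicate_succ] using h)
  refine ⟨le_rfl, le_of_replicate_prefix_abab hab.symm (i := k + 1) (j := q + 1)
    (by simp [abab]) ?_⟩
  have : replicate (q + 1) b <+:
      replicate (k + 1) b ++ replicate (q + 1) a ++ replicate (k + 1) b :=
    (prefix_append_right_inj (replicate (q + 1) a)).1 (by simpa only [abab, append_assoc] using h)
  exact this.trans (prefix_append _ _)

lemma le_of_prefix_of_suffix_abab (hab : a ≠ b) (ha : replicate p a <+: abab a b i j)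
    (hb : replicate p b <:+ abab a b i j) : p ≤ i ∧ p ≤ j := by
  rcases Nat.eq_zero_or_pos p with rfl | hp
  · simp
  refine ⟨le_of_replicate_prefix_abab hab (hb.subset (by simp [hp.ne'])) ha,
    le_of_replicate_prefix_abab hab.symm (j := i) ?_ ?_⟩
  · rw [← reverse_abab, mem_reverse]
    exact ha.subset (by simp [hp.ne'])
  · have := reverse_prefix.2 hb
    rwa [reverse_replicate, reverse_abab] at this

lemma ne_abab_of_pump_down (hab : a ≠ b) {u v s x y : List α}
    (hw : u ++ v ++ s ++ x ++ y = abab a b p p) (hvx : v ++ x ≠ [])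
    (hwin : (v ++ s ++ x).length ≤ p) : u ++ s ++ y ≠ abab a b i j := by
  intro hD
  have hlen := congrArg length hw
  have hlenD := congrArg length hD
  have hvx' := length_pos_iff.2 hvx
  simp only [length_append, length_abab] at hlen hlenD hvx' hwin
  suffices p ≤ i ∧ p ≤ j by omega
  have hpre (l : List α) (hl : l <+: abab a b p p) (hlu : l.length ≤ u.length) :
      l <+: abab a b i j :=
    hD ▸ (prefix_of_prefix_length_le hl (hw ▸ by simp [append_assoc]) hlu).trans
      (by simp [append_assoc])
  have hsuf (l : List α) (hl : l <:+ abab a b p p) (hly : l.length ≤ y.length) :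
      l <:+ abab a b i j :=
    hD ▸ (suffix_of_suffix_length_le hl (hw ▸ suffix_append _ _) hly).trans (suffix_append _ _)
  rcases (by omega : 2 * p ≤ u.length ∨ p ≤ u.length ∧ p ≤ y.length ∨ 2 * p ≤ y.length)
    with hu | ⟨hu, hy⟩ | hy
  · exact le_of_prefix_abab hab (hpre _ ⟨replicate p a ++ replicate p b, by simp [abab]⟩
      (by simp; omega))
  · exact le_of_prefix_of_suffix_abab hab
      (hpre _ ⟨replicate p b ++ replicate p a ++ replicate p b, by simp [abab]⟩ (by simpa))
      (hsuf _ ⟨replicate p a ++ replicate p b ++ replicate p a, by simp [abab]⟩ (by simpa))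
  · have h := hsuf (replicate p a ++ replicate p b)
      ⟨replicate p a ++ replicate p b, by simp [abab]⟩ (by simp; omega)
    rw [← reverse_prefix, reverse_abab] at h
    exact (le_of_prefix_abab hab.symm (by simpa using h)).symm

end abab

/-- For distinct letters `a ≠ b`, the language `{aⁱbʲaⁱbʲ : i, j ∈ ℕ}` is not context-free. -/
theorem aibj_aibj_not_contextFree {α : Type*} (a b : α) (hab : a ≠ b) :
    ¬ Language.IsContextFree ({w : List α | ∃ i j : ℕ,
        w = List.replicate i a ++ List.replicate j b ++
            List.replicate i a ++ List.replicate j b} : Language α) := by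
  intro hL
  obtain ⟨p, hp⟩ := hL.exists_pump_down
  obtain ⟨u, v, s, x, y, hw, hvx, hwin, i, j, hD⟩ :=
    hp (abab a b p p) ⟨p, p, rfl⟩ (by rw [length_abab]; omega)
  exact ne_abab_of_pump_down hab hw.symm hvx hwin hD
end
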